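/- Conditional probability estimate for the bad events of the coupled chain: Assume hypothesis (C) with constants q ∈ [0,1) and C > 0, and fix x, x' ∈ X. Then for the coupled chain (x_k, x_k') on (Ω,P) and for every k ∈ ℕ, the conditional expectation satisfies, P-almost surely, E[1_{C_k} | F_k] ≤ C·q^k·d(x,x'), where C_k = B_k ∩ A_k^c, A_k = {ω : d(x_{k+1}(ω), x_{k+1}'(ω)) ≤ q·d(x_k(ω), x_k'(ω))}, and B_k = ∩_{j=0}^{k−1} A_j (with B_0 = Ω). -/

import Mathlib

/-!
On the good event `B_k` the two chains are within `q^k d(x,x')` of each other, and both `B_k`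
and the state `(x_k, x_k')` are functions of `ω_0, …, ω_{k-1}`. Under the product measure `ω_k`
is independent of these coordinates, so by Fubini over `ω ↦ (ω_k, (ω_0, …, ω_{k-1}))` the bad
event, restricted to any `S ∈ F_k`, has probability at most `C q^k d(x,x') P(S)`: slice by slice
it is the failure of a single coupling step started from `(x_k, x_k')`, bounded by (C). This
set-wise bound is the conditional-expectation bound.
-/

open MeasureTheory Filter Topology
open scoped ENNReal NNReal

noncomputable def FK {X : Type*} [MeasurableSpace X] (κ : X → Measure X) (V f : X → ℝ) (x : X) : ℝ :=
  ∫ y, Real.exp (V y) * f y ∂(κ x)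

noncomputable def FKiter {X : Type*} [MeasurableSpace X] (κ : X → Measure X) (V : X → ℝ) :
    ℕ → (X → ℝ) → X → ℝ
  | 0 => fun f => f
  | n + 1 => fun f => FK κ V (FKiter κ V n f)

noncomputable def supNorm {X : Type*} (f : X → ℝ) : ℝ := ⨆ x, |f x|

noncomputable def lipConst {X : Type*} [MetricSpace X] (f : X → ℝ) : ℝ :=
  sSup {c | ∃ x y, x ≠ y ∧ c = |f x - f y| / dist x y}

noncomputable def lipNorm {X : Type*} [MetricSpace X] (f : X → ℝ) : ℝ := supNorm f + lipConst f

/-- The coupled chain `(x_k, x_k')` driven by the maps `R, R'` and the noise sequence `ω`. -/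
def chain {X Ω₀ : Type*} (R R' : X → X → Ω₀ → X) (x x' : X) : ℕ → (ℕ → Ω₀) → X × X
  | 0 => fun _ => (x, x')
  | k + 1 => fun ω =>
      (R (chain R R' x x' k ω).1 (chain R R' x x' k ω).2 (ω k),
       R' (chain R R' x x' k ω).1 (chain R R' x x' k ω).2 (ω k))

/-- The squeezing event `A_j` for the coupled chain. -/
def eventA {X Ω₀ : Type*} [MetricSpace X] (R R' : X → X → Ω₀ → X) (x x' : X) (q : ℝ)
    (j : ℕ) : Set (ℕ → Ω₀) :=
  {ω | dist (chain R R' x x' (j + 1) ω).1 (chain R R' x x' (j + 1) ω).2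
        ≤ q * dist (chain R R' x x' j ω).1 (chain R R' x x' j ω).2}

/-- The good event `B_k = ∩_{j<k} A_j`. -/
def eventB {X Ω₀ : Type*} [MetricSpace X] (R R' : X → X → Ω₀ → X) (x x' : X) (q : ℝ)
    (k : ℕ) : Set (ℕ → Ω₀) :=
  ⋂ j ∈ Finset.range k, eventA R R' x x' q j

/-- The bad event `C_k = B_k ∩ A_kᶜ`. -/
def eventC {X Ω₀ : Type*} [MetricSpace X] (R R' : X → X → Ω₀ → X) (x x' : X) (q : ℝ)
    (k : ℕ) : Set (ℕ → Ω₀) :=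
  eventB R R' x x' q k ∩ (eventA R R' x x' q k)ᶜ

section CondExp

variable {α : Type*} {m m₀ : MeasurableSpace α} {μ : Measure α}

theorem condExp_ae_le_const_of_forall_setIntegral_le [IsFiniteMeasure μ] (hm : m ≤ m₀)
    {f : α → ℝ} (hf : Integrable f μ) {c : ℝ}
    (hfc : ∀ s, MeasurableSet[m] s → ∫ x in s, f x ∂μ ≤ c * μ.real s) :
    ∀ᵐ x ∂μ, μ[f|m] x ≤ c := by
  have : IsFiniteMeasure (μ.trim hm) := isFiniteMeasure_trim hm
  refine ae_le_of_ae_le_trim (ae_le_of_forall_setIntegral_le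
    (integrable_condExp.trim hm stronglyMeasurable_condExp) (integrable_const c) fun s hs _ => ?_)
  rw [← setIntegral_trim hm stronglyMeasurable_condExp hs,
    ← setIntegral_trim hm stronglyMeasurable_const hs, setIntegral_condExp hm hf hs,
    setIntegral_const, smul_eq_mul, mul_comm]
  exact hfc s hs

end CondExp

section Sequences

variable {Ω₀ : Type*}

def extendByConst {k : ℕ} (u : Fin k → Ω₀) (a : Ω₀) : ℕ → Ω₀ :=
  fun i => if h : i < k then u ⟨i, h⟩ else a

theorem extendByConst_of_lt {k i : ℕ} (u : Fin k → Ω₀) (a : Ω₀) (h : i < k) :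
    extendByConst u a i = u ⟨i, h⟩ := dif_pos h

theorem extendByConst_self {k : ℕ} (u : Fin k → Ω₀) (a : Ω₀) : extendByConst u a k = a :=
  dif_neg (lt_irrefl k)

theorem extendByConst_restrict_of_lt {k i : ℕ} (ω : ℕ → Ω₀) (h : i < k + 1) :
    extendByConst (fun j : Fin k => ω j) (ω k) i = ω i := by
  unfold extendByConst
  split_ifs with hi
  · rfl
  · rw [show i = k by omega]

theorem measurable_extendByConst [MeasurableSpace Ω₀] {k : ℕ} :
    Measurable fun p : Ω₀ × (Fin k → Ω₀) => extendByConst p.2 p.1 := by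
  refine measurable_pi_iff.mpr fun i => ?_
  by_cases h : i < k
  · simp only [extendByConst, h, dite_true]
    fun_prop
  · simpa [extendByConst, h] using measurable_fst

variable [MeasurableSpace Ω₀] {P₀ : Measure Ω₀} [SigmaFinite P₀] {P : Measure (ℕ → Ω₀)}

theorem map_eval_prod_restrict_eq_prod
    (hP : ∀ n : ℕ, P.map (fun ω (i : Fin n) => ω i) = Measure.pi fun _ : Fin n => P₀) (k : ℕ) :
    P.map (fun ω => (ω k, fun i : Fin k => ω i)) = P₀.prod (Measure.pi fun _ : Fin k => P₀) := by
  have hsplit : (fun ω : ℕ → Ω₀ => (ω k, fun i : Fin k => ω i)) =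
      MeasurableEquiv.piFinSuccAbove (fun _ : Fin (k + 1) => Ω₀) (Fin.last k) ∘
        fun ω (i : Fin (k + 1)) => ω i := by
    ext ω i <;> simp [Fin.init]
  rw [hsplit, ← Measure.map_map (MeasurableEquiv.measurable _) (by fun_prop), hP,
    (measurePreserving_piFinSuccAbove (fun _ : Fin (k + 1) => P₀) (Fin.last k)).map_eq]

theorem measure_inter_restrict_preimage_le
    (hP : ∀ n : ℕ, P.map (fun ω (i : Fin n) => ω i) = Measure.pi fun _ : Fin n => P₀) {k : ℕ}
    {E : Set (ℕ → Ω₀)} (hEm : MeasurableSet E)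
    (hE : ∀ ω, ω ∈ E ↔ extendByConst (fun i : Fin k => ω i) (ω k) ∈ E) {c : ℝ≥0∞}
    (hslice : ∀ u : Fin k → Ω₀, P₀ {a | extendByConst u a ∈ E} ≤ c) {T : Set (Fin k → Ω₀)}
    (hT : MeasurableSet T) :
    P (E ∩ (fun ω (i : Fin k) => ω i) ⁻¹' T) ≤ c * P ((fun ω (i : Fin k) => ω i) ⁻¹' T) := by
  set W := {p : Ω₀ × (Fin k → Ω₀) | extendByConst p.2 p.1 ∈ E ∧ p.2 ∈ T}
  have hW : MeasurableSet W := (measurable_extendByConst hEm).inter (measurable_snd hT)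
  have hpre : E ∩ (fun ω (i : Fin k) => ω i) ⁻¹' T =
      (fun ω => (ω k, fun i : Fin k => ω i)) ⁻¹' W := by
    ext ω
    simp only [Set.mem_inter_iff, Set.mem_preimage, Set.mem_ofPred_eq, W, ← hE ω]
  have hslice_indicator : ∀ u, P₀ ((fun a => (a, u)) ⁻¹' W) ≤ T.indicator (fun _ => c) u := by
    intro u
    by_cases hu : u ∈ T
    · simpa [W, hu] using hslice u
    · simp [W, hu]
  calc P (E ∩ (fun ω (i : Fin k) => ω i) ⁻¹' T)
      = (P₀.prod (Measure.pi fun _ : Fin k => P₀)) W := by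
        rw [hpre, ← map_eval_prod_restrict_eq_prod hP k, Measure.map_apply (by fun_prop) hW]
    _ = ∫⁻ u, P₀ ((fun a => (a, u)) ⁻¹' W) ∂(Measure.pi fun _ : Fin k => P₀) :=
        Measure.prod_apply_symm hW
    _ ≤ ∫⁻ u, T.indicator (fun _ => c) u ∂(Measure.pi fun _ : Fin k => P₀) :=
        lintegral_mono hslice_indicator
    _ = c * P ((fun ω (i : Fin k) => ω i) ⁻¹' T) := by
        rw [lintegral_indicator hT, setLIntegral_const, ← hP k,
          Measure.map_apply (by fun_prop) hT]

theorem condExp_indicator_comap_restrict_ae_le [IsFiniteMeasure P]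
    (hP : ∀ n : ℕ, P.map (fun ω (i : Fin n) => ω i) = Measure.pi fun _ : Fin n => P₀) {k : ℕ}
    {E : Set (ℕ → Ω₀)} (hEm : MeasurableSet E)
    (hE : ∀ ω, ω ∈ E ↔ extendByConst (fun i : Fin k => ω i) (ω k) ∈ E) {c : ℝ} (hc : 0 ≤ c)
    (hslice : ∀ u : Fin k → Ω₀, P₀ {a | extendByConst u a ∈ E} ≤ ENNReal.ofReal c) :
    ∀ᵐ ω ∂P, P[E.indicator (fun _ => (1 : ℝ))
      | MeasurableSpace.comap (fun ω (i : Fin k) => ω i) inferInstance] ω ≤ c := by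
  have hπ : Measurable fun (ω : ℕ → Ω₀) (i : Fin k) => ω i := by fun_prop
  refine condExp_ae_le_const_of_forall_setIntegral_le hπ.comap_le
    ((integrable_const 1).indicator hEm) ?_
  rintro _ ⟨T, hT, rfl⟩
  have hbound := measure_inter_restrict_preimage_le hP hEm hE hslice hT
  rw [setIntegral_indicator hEm, setIntegral_const, smul_eq_mul, mul_one, Set.inter_comm,
    Measure.real, Measure.real, ← ENNReal.toReal_ofReal hc, ← ENNReal.toReal_mul]
  exact ENNReal.toReal_mono (by finiteness) hbound

end Sequences

section CoupledChain

variable {X Ω₀ : Type*} (R R' : X → X → Ω₀ → X) (x x' : X)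

theorem chain_congr {n : ℕ} {ω ω' : ℕ → Ω₀} (h : ∀ i < n, ω i = ω' i) :
    chain R R' x x' n ω = chain R R' x x' n ω' := by
  induction n with
  | zero => rfl
  | succ n ih =>
    simp only [chain, ih fun i hi => h i (by omega), h n n.lt_succ_self]

theorem measurable_chain [MeasurableSpace X] [MeasurableSpace Ω₀]
    (hR : Measurable fun p : (X × X) × Ω₀ => R p.1.1 p.1.2 p.2)
    (hR' : Measurable fun p : (X × X) × Ω₀ => R' p.1.1 p.1.2 p.2) (n : ℕ) :
    Measurable (chain R R' x x' n) := by
  induction n with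
  | zero => exact measurable_const
  | succ n ih =>
    have hstate : Measurable fun ω : ℕ → Ω₀ => (chain R R' x x' n ω, ω n) :=
      ih.prodMk (measurable_pi_apply n)
    exact (hR.comp hstate).prodMk (hR'.comp hstate)

variable [MetricSpace X] (q : ℝ)

theorem mem_eventA_congr {j : ℕ} {ω ω' : ℕ → Ω₀} (h : ∀ i < j + 1, ω i = ω' i) :
    ω ∈ eventA R R' x x' q j ↔ ω' ∈ eventA R R' x x' q j := by
  simp only [eventA, Set.mem_ofPred_eq]
  rw [chain_congr R R' x x' h, chain_congr R R' x x' fun i hi => h i (by omega)]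

theorem mem_eventB_iff {k : ℕ} {ω : ℕ → Ω₀} :
    ω ∈ eventB R R' x x' q k ↔ ∀ j < k, ω ∈ eventA R R' x x' q j := by
  simp [eventB]

theorem mem_eventB_congr {k : ℕ} {ω ω' : ℕ → Ω₀} (h : ∀ i < k, ω i = ω' i) :
    ω ∈ eventB R R' x x' q k ↔ ω' ∈ eventB R R' x x' q k := by
  simp only [mem_eventB_iff]
  exact forall₂_congr fun j hj => mem_eventA_congr R R' x x' q fun i hi => h i (by omega)

theorem mem_eventC_congr {k : ℕ} {ω ω' : ℕ → Ω₀} (h : ∀ i < k + 1, ω i = ω' i) :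
    ω ∈ eventC R R' x x' q k ↔ ω' ∈ eventC R R' x x' q k := by
  simp only [eventC, Set.mem_inter_iff, Set.mem_compl_iff]
  rw [mem_eventB_congr R R' x x' q fun i hi => h i (by omega), mem_eventA_congr R R' x x' q h]

theorem dist_chain_le_of_mem_eventB (hq : 0 ≤ q) {k : ℕ} {ω : ℕ → Ω₀}
    (hω : ω ∈ eventB R R' x x' q k) :
    dist (chain R R' x x' k ω).1 (chain R R' x x' k ω).2 ≤ q ^ k * dist x x' := by
  rw [mem_eventB_iff] at hω
  induction k with
  | zero => simp [chain]
  | succ k ih =>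
    calc dist (chain R R' x x' (k + 1) ω).1 (chain R R' x x' (k + 1) ω).2
        ≤ q * dist (chain R R' x x' k ω).1 (chain R R' x x' k ω).2 := hω k k.lt_succ_self
      _ ≤ q * (q ^ k * dist x x') := by
        gcongr
        exact ih fun j hj => hω j (by omega)
      _ = q ^ (k + 1) * dist x x' := by ring

theorem measure_extendByConst_mem_eventC_le {C : ℝ} (hq : 0 ≤ q) (hC : 0 ≤ C)
    [MeasurableSpace Ω₀] {P₀ : Measure Ω₀}
    (hcouple : ∀ x x' : X,
      P₀ {ω | q * dist x x' < dist (R x x' ω) (R' x x' ω)} ≤ ENNReal.ofReal (C * dist x x'))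
    {k : ℕ} (u : Fin k → Ω₀) :
    P₀ {a | extendByConst u a ∈ eventC R R' x x' q k} ≤
      ENNReal.ofReal (C * q ^ k * dist x x') := by
  by_cases hB : ∃ a₀, extendByConst u a₀ ∈ eventB R R' x x' q k
  · obtain ⟨a₀, ha₀⟩ := hB
    set z := chain R R' x x' k (extendByConst u a₀)
    have hz : ∀ a, chain R R' x x' k (extendByConst u a) = z := fun a =>
      chain_congr R R' x x' fun i hi => by
        rw [extendByConst_of_lt u a hi, extendByConst_of_lt u a₀ hi]
    have hsub : {a | extendByConst u a ∈ eventC R R' x x' q k} ⊆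
        {a | q * dist z.1 z.2 < dist (R z.1 z.2 a) (R' z.1 z.2 a)} := by
      intro a ⟨_, hA⟩
      have hstep : chain R R' x x' (k + 1) (extendByConst u a) =
          (R z.1 z.2 a, R' z.1 z.2 a) := by
        simp only [chain, hz, extendByConst_self]
      simpa [eventA, hstep, hz] using hA
    calc P₀ {a | extendByConst u a ∈ eventC R R' x x' q k}
        ≤ ENNReal.ofReal (C * dist z.1 z.2) := (measure_mono hsub).trans (hcouple _ _)
      _ ≤ ENNReal.ofReal (C * q ^ k * dist x x') := by
        rw [mul_assoc]
        gcongr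
        exact dist_chain_le_of_mem_eventB R R' x x' q hq ha₀
  · have hempty : {a | extendByConst u a ∈ eventC R R' x x' q k} = ∅ :=
      Set.eq_empty_of_forall_notMem fun a ha => hB ⟨a, ha.1⟩
    simp [hempty]

variable [MeasurableSpace X] [OpensMeasurableSpace X] [SecondCountableTopology X]
  [MeasurableSpace Ω₀]

theorem measurableSet_eventA (hR : Measurable fun p : (X × X) × Ω₀ => R p.1.1 p.1.2 p.2)
    (hR' : Measurable fun p : (X × X) × Ω₀ => R' p.1.1 p.1.2 p.2) (j : ℕ) : MeasurableSet (eventA R R' x x' q j) := by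
  have h₁ := measurable_chain R R' x x' hR hR' (j + 1)
  have h₀ := measurable_chain R R' x x' hR hR' j
  exact measurableSet_le (h₁.fst.dist h₁.snd) (measurable_const.mul (h₀.fst.dist h₀.snd))

theorem measurableSet_eventC (hR : Measurable fun p : (X × X) × Ω₀ => R p.1.1 p.1.2 p.2)
    (hR' : Measurable fun p : (X × X) × Ω₀ => R' p.1.1 p.1.2 p.2) (k : ℕ) : MeasurableSet (eventC R R' x x' q k) :=
  .inter (.biInter (Set.to_countable _) fun j _ => measurableSet_eventA R R' x x' q hR hR' j)
    (measurableSet_eventA R R' x x' q hR hR' k).compl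

end CoupledChain

theorem bad_event_conditional_estimate_general
    {X : Type*} [MetricSpace X] [CompactSpace X] [MeasurableSpace X] [BorelSpace X]
    {Ω₀ : Type*} [MeasurableSpace Ω₀] (P₀ : Measure Ω₀) [IsProbabilityMeasure P₀]
    (q : ℝ) (hq0 : 0 ≤ q) (C : ℝ) (hC : 0 < C)
    (R R' : X → X → Ω₀ → X)
    (hRmeas : Measurable fun p : (X × X) × Ω₀ => R p.1.1 p.1.2 p.2)
    (hR'meas : Measurable fun p : (X × X) × Ω₀ => R' p.1.1 p.1.2 p.2)
    (hcouple : ∀ x x' : X,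
      P₀ {ω | q * dist x x' < dist (R x x' ω) (R' x x' ω)} ≤ ENNReal.ofReal (C * dist x x'))
    -- `P` is the countable product measure `P₀^{⊗ℕ}` on `Ω = Ω₀^ℕ`
    (P : Measure (ℕ → Ω₀)) [IsProbabilityMeasure P]
    (hP : ∀ n : ℕ, Measure.map (fun ω (i : Fin n) => ω i) P = Measure.pi fun _ : Fin n => P₀)
    (x x' : X) (k : ℕ) :
    ∀ᵐ ω ∂P,
      (P[(eventC R R' x x' q k).indicator (fun _ => (1 : ℝ))
          | MeasurableSpace.comap (fun ω' (i : Fin k) => ω' i) inferInstance]) ω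
        ≤ C * q ^ k * dist x x' :=
  condExp_indicator_comap_restrict_ae_le hP (measurableSet_eventC R R' x x' q hRmeas hR'meas k)
    (fun ω => mem_eventC_congr R R' x x' q fun i hi => (extendByConst_restrict_of_lt ω hi).symm)
    (by positivity) (measure_extendByConst_mem_eventC_le R R' x x' q hq0 hC.le hcouple)

/-- Conditional probability estimate for the bad events of the coupled
chain: `E[1_{C_k} | F_k] ≤ C·q^k·d(x,x')` almost surely, where `F_k` is the σ-algebra
generated by the coordinates `ω_0, …, ω_{k−1}`. -/
theorem bad_event_conditional_estimate
    {X : Type*} [MetricSpace X] [CompactSpace X] [MeasurableSpace X] [BorelSpace X]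
    (κ : X → Measure X) (hκmeas : Measurable κ)
    (hκprob : ∀ x, IsProbabilityMeasure (κ x))
    {Ω₀ : Type*} [MeasurableSpace Ω₀] (P₀ : Measure Ω₀) [IsProbabilityMeasure P₀]
    (q : ℝ) (hq0 : 0 ≤ q) (hq1 : q < 1) (C : ℝ) (hC : 0 < C)
    (R R' : X → X → Ω₀ → X)
    (hRmeas : Measurable fun p : (X × X) × Ω₀ => R p.1.1 p.1.2 p.2)
    (hR'meas : Measurable fun p : (X × X) × Ω₀ => R' p.1.1 p.1.2 p.2)
    (hRlaw : ∀ x x' : X, Measure.map (R x x') P₀ = κ x)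
    (hR'law : ∀ x x' : X, Measure.map (R' x x') P₀ = κ x')
    (hcouple : ∀ x x' : X,
      P₀ {ω | q * dist x x' < dist (R x x' ω) (R' x x' ω)} ≤ ENNReal.ofReal (C * dist x x'))
    -- `P` is the countable product measure `P₀^{⊗ℕ}` on `Ω = Ω₀^ℕ`
    (P : Measure (ℕ → Ω₀)) [IsProbabilityMeasure P]
    (hP : ∀ n : ℕ, Measure.map (fun ω (i : Fin n) => ω i) P = Measure.pi fun _ : Fin n => P₀)
    (x x' : X) (k : ℕ) :
    ∀ᵐ ω ∂P,
      (P[(eventC R R' x x' q k).indicator (fun _ => (1 : ℝ))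
          | MeasurableSpace.comap (fun ω' (i : Fin k) => ω' i) inferInstance]) ω
        ≤ C * q ^ k * dist x x' :=
  bad_event_conditional_estimate_general P₀ q hq0 C hC R R' hRmeas hR'meas hcouple P hP x x' k
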